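/- arXiv:1209.1074 — 2 statements merged into one kernel-verified Lean document; each statement's English description precedes it below -/
import Mathlib

section
/- (Bounded packing implies uniform local finiteness) Let G be a group with finite generating set S acting on a wallspace (X, W) (acting on X and on the index set compatibly) with only finitely many G-orbits of wall indices. Suppose there are only finitely many G-orbits of unordered pairs of transverse walls and only finitely many G-orbits of unordered pairs of osculating walls, and suppose that for each wall index i the stabilizer Stab_G(i) has bounded packing in G. Then the dual cube complex is uniformly locally finite: there exists N such that every 0-cube has at most N reversible walls. -/
open Pointwise

/-- A wallspace on a set `X`: an indexed family of walls `W i = (U i, V i)` whose closed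
halfspaces cover `X`, such that each point betwixts only finitely many walls, any two points
are separated by only finitely many walls, and there are no duplicate genuine partitions. -/
structure Wallspace (X : Type*) (ι : Type*) where
  U : ι → Set X
  V : ι → Set X
  cover : ∀ i, U i ∪ V i = Set.univ
  betwixt_finite : ∀ x : X, {i : ι | x ∈ U i ∩ V i}.Finite
  sep_finite : ∀ x y : X, {i : ι |
      (x ∈ U i \ V i ∧ y ∈ V i \ U i) ∨ (x ∈ V i \ U i ∧ y ∈ U i \ V i)}.Finite
  no_dup_partition : ∀ i j, i ≠ j →
    ((U i = U j ∧ V i = V j) ∨ (U i = V j ∧ V i = U j)) →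
    U i ∩ V i = ∅ → ¬((U i).Nonempty ∧ (V i).Nonempty)

namespace Wallspace

variable {X ι : Type*} (W : Wallspace X ι)

/-- The closed halfspace of wall `i` selected by `b` (`true ↦ U i`, `false ↦ V i`). -/
def side (i : ι) : Bool → Set X
  | true => W.U i
  | false => W.V i

/-- The open halfspace of wall `i` on the side `b`. -/
def openSide (i : ι) (b : Bool) : Set X :=
  W.side i b \ W.side i (!b)

/-- The wall `i` separates the points `x` and `y`: they lie in distinct open halfspaces. -/
def Separates (i : ι) (x y : X) : Prop :=
  (x ∈ W.U i \ W.V i ∧ y ∈ W.V i \ W.U i) ∨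
  (x ∈ W.V i \ W.U i ∧ y ∈ W.U i \ W.V i)

/-- A `0`-cube of the dual cube complex: an orientation `c` of the walls (where `c i` selects
the left halfspace `W.side i (c i)` of the wall `i`) such that any two left halfspaces meet
and every point lies in all but finitely many left halfspaces. -/
def IsZeroCube (c : ι → Bool) : Prop :=
  (∀ i j : ι, (W.side i (c i) ∩ W.side j (c j)).Nonempty) ∧
  (∀ x : X, {i : ι | x ∉ W.side i (c i)}.Finite)

/-- Distinct walls `i ≠ j` are transverse if all four intersections of closed halfspaces
are nonempty. -/
def Transverse (i j : ι) : Prop :=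
  i ≠ j ∧ (W.U i ∩ W.U j).Nonempty ∧ (W.U i ∩ W.V j).Nonempty ∧
    (W.V i ∩ W.U j).Nonempty ∧ (W.V i ∩ W.V j).Nonempty

/-- The wall `i` is reversible at the `0`-cube `c`: the orientation agreeing with `c` except
that the pair at `i` is swapped is again a `0`-cube. -/
def Reversible (c : ι → Bool) (i : ι) : Prop :=
  ∀ c' : ι → Bool, c' i = !(c i) → (∀ j, j ≠ i → c' j = c j) → W.IsZeroCube c'

/-- The wall `i` crosses the subset `A` if `A` meets both closed halfspaces of `i`. -/
def Crosses (i : ι) (A : Set X) : Prop :=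
  (A ∩ W.U i).Nonempty ∧ (A ∩ W.V i).Nonempty

/-- The wall `k` separates the walls `i` and `j`: some closed halfspace of `i` and some
closed halfspace of `j` lie in distinct open halfspaces of `k`. -/
def SeparatesWalls (k i j : ι) : Prop :=
  k ≠ i ∧ k ≠ j ∧ ∃ a bi bj : Bool,
    W.side i bi ⊆ W.openSide k a ∧ W.side j bj ⊆ W.openSide k (!a)

/-- Distinct walls `i`, `j` osculate if they are not transverse and no wall separates them. -/
def Osculate (i j : ι) : Prop :=
  i ≠ j ∧ ¬ W.Transverse i j ∧ ∀ k : ι, ¬ W.SeparatesWalls k i j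

/-- Two `0`-cubes are adjacent if they differ at exactly one wall index. -/
def Adjacent (c d : ι → Bool) : Prop :=
  W.IsZeroCube c ∧ W.IsZeroCube d ∧ ∃! i : ι, c i ≠ d i

end Wallspace

/-- A group `G` acts on the wallspace `W` if it acts on `X` and on the index set so that
the unordered pair of halfspaces of `g • i` is the `g`-translate of that of `i`. -/
def WallspaceAction (G : Type*) [Group G] {X ι : Type*} [MulAction G X] [MulAction G ι]
    (W : Wallspace X ι) : Prop :=
  ∀ (g : G) (i : ι),
    (W.U (g • i) = g • W.U i ∧ W.V (g • i) = g • W.V i) ∨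
    (W.U (g • i) = g • W.V i ∧ W.V (g • i) = g • W.U i)

/-- `g` is a product of fewer than `D` elements of `S ∪ S⁻¹`. -/
def HasWordLengthLT {G : Type*} [Group G] (S : Set G) (g : G) (D : ℝ) : Prop :=
  ∃ l : List G, (∀ a ∈ l, a ∈ S ∨ a⁻¹ ∈ S) ∧ l.prod = g ∧ (l.length : ℝ) < D

/-- Subsets `A`, `B` of `G` are `D`-close with respect to the generating set `S`. -/
def DClose {G : Type*} [Group G] (S : Set G) (D : ℝ) (A B : Set G) : Prop :=
  ∃ a ∈ A, ∃ b ∈ B, HasWordLengthLT S (a⁻¹ * b) D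

/-- `H` has bounded packing in `G` (with respect to the generating set `S`): for each `D > 0`
there exists `k` such that every collection of pairwise `D`-close left cosets of `H` has
cardinality at most `k`. -/
def BoundedPacking {G : Type*} [Group G] (S : Set G) (H : Subgroup G) : Prop :=
  ∀ D : ℝ, 0 < D → ∃ k : ℕ, ∀ C : Set (Set G),
    (∀ A ∈ C, ∃ g : G, A = g • (H : Set G)) →
    C.Pairwise (DClose S D) → C.Finite ∧ C.ncard ≤ k

/-- The frontier of `A ⊆ G` with respect to the finite generating set `S`. -/
def frontierIn {G : Type*} [Group G] (S : Finset G) (A : Set G) : Set G :=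
  {a : G | a ∈ A ∧ ∃ s : G, (s ∈ S ∨ s⁻¹ ∈ S) ∧ a * s ∉ A}

/-- `A` is `H`-finite: `A ⊆ H · F` for some finite `F`. -/
def HSetFinite {G : Type*} [Group G] (H : Set G) (A : Set G) : Prop :=
  ∃ F : Finset G, A ⊆ H * (F : Set G)

/-- An `H`-wall `{U, V}` in `G`: the halfspaces cover `G`, the pair is `H`-invariant,
`U ∩ V` is `H`-finite, and `U` and `V` have `Ḧ`-finite frontiers, where
`Ḧ = {h ∈ H : hU = U ∧ hV = V}`. -/
structure IsHWall {G : Type*} [Group G] (S : Finset G) (H : Subgroup G)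
    (U V : Set G) : Prop where
  cover : U ∪ V = Set.univ
  invar : ∀ h ∈ H, (h • U = U ∧ h • V = V) ∨ (h • U = V ∧ h • V = U)
  inter_hfinite : HSetFinite (H : Set G) (U ∩ V)
  frontierU : HSetFinite {h : G | h ∈ H ∧ h • U = U ∧ h • V = V} (frontierIn S U)
  frontierV : HSetFinite {h : G | h ∈ H ∧ h • U = U ∧ h • V = V} (frontierIn S V)


/-
Both halfspaces of a wall reversible at a `0`-cube meet every halfspace the `0`-cube picks for
another wall, whereas a wall separating two walls puts a halfspace of one of them inside its open
halfspace opposite to the `0`-cube's choice; so any two reversible walls are transverse or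
osculate. Inside one orbit `G • j` every pair of reversible walls is therefore a translate of one
of finitely many pairs, and the cosets `g • Stab(j)` they correspond to are pairwise `D`-close
for a single `D` read off from those finitely many pairs. Bounded packing of `Stab(j)` bounds their number independently of
the `0`-cube, and summing over the finitely many orbits of walls gives `N`.
-/

section WordLength

variable {G : Type*} [Group G] {S : Set G}

lemma HasWordLengthLT.mono {g : G} {D D' : ℝ} (h : HasWordLengthLT S g D) (hD : D ≤ D') :
    HasWordLengthLT S g D' := by
  obtain ⟨l, hl, rfl, hlen⟩ := h
  exact ⟨l, hl, rfl, hlen.trans_le hD⟩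

lemma HasWordLengthLT.inv {g : G} {D : ℝ} (h : HasWordLengthLT S g D) :
    HasWordLengthLT S g⁻¹ D := by
  obtain ⟨l, hl, rfl, hlen⟩ := h
  refine ⟨(l.map (·⁻¹)).reverse, ?_, (List.prod_inv_reverse l).symm, by simpa using hlen⟩
  intro a ha
  obtain ⟨x, hx, rfl⟩ := List.mem_map.mp (List.mem_reverse.mp ha)
  simpa [or_comm] using hl x hx

lemma exists_hasWordLengthLT_of_closure_eq_top (hS : Subgroup.closure S = ⊤) (g : G) :
    ∃ D : ℝ, HasWordLengthLT S g D := by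
  have hg : g ∈ Submonoid.closure (S ∪ S⁻¹) := by
    rw [← Subgroup.closure_toSubmonoid, hS]
    trivial
  obtain ⟨l, hl, rfl⟩ := Submonoid.exists_list_of_mem_closure hg
  exact ⟨l.length + 1, l, fun a ha => by simpa using hl a ha, rfl, by linarith⟩

lemma DClose.mono {D D' : ℝ} {A B : Set G} (h : DClose S D A B) (hD : D ≤ D') :
    DClose S D' A B := by
  obtain ⟨a, ha, b, hb, hab⟩ := h
  exact ⟨a, ha, b, hb, hab.mono hD⟩

lemma DClose.symm {D : ℝ} {A B : Set G} (h : DClose S D A B) : DClose S D B A := by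
  obtain ⟨a, ha, b, hb, hab⟩ := h
  exact ⟨b, hb, a, ha, by simpa using hab.inv⟩

lemma DClose.smul {D : ℝ} {A B : Set G} (h : DClose S D A B) (g : G) :
    DClose S D (g • A) (g • B) := by
  obtain ⟨a, ha, b, hb, hab⟩ := h
  exact ⟨g * a, Set.smul_mem_smul_set ha, g * b, Set.smul_mem_smul_set hb, by simpa [mul_assoc]⟩

lemma eventually_dClose_of_closure_eq_top (hS : Subgroup.closure S = ⊤) {A B : Set G}
    (hA : A.Nonempty) (hB : B.Nonempty) : ∀ᶠ D in Filter.atTop, DClose S D A B := by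
  obtain ⟨a, ha⟩ := hA
  obtain ⟨b, hb⟩ := hB
  obtain ⟨D, hD⟩ := exists_hasWordLengthLT_of_closure_eq_top hS (a⁻¹ * b)
  filter_upwards [Filter.eventually_ge_atTop D] with D' hD'
  exact ⟨a, ha, b, hb, hD.mono hD'⟩

end WordLength

namespace MulAction

variable (G : Type*) {ι : Type*} [Group G] [MulAction G ι]

def transporter (j i : ι) : Set G :=
  {g : G | g • j = i}

def IsPairTranslate (T : Finset (ι × ι)) (a b : ι) : Prop :=
  ∃ g : G, ∃ p ∈ T, (a = g • p.1 ∧ b = g • p.2) ∨ (a = g • p.2 ∧ b = g • p.1)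

variable {G}

lemma transporter_smul (j i : ι) (g : G) : transporter G j (g • i) = g • transporter G j i := by
  ext x
  simp [transporter, Set.mem_smul_set_iff_inv_smul_mem, mul_smul, inv_smul_eq_iff]

lemma transporter_eq_smul_stabilizer {j i : ι} {g : G} (h : g • j = i) :
    transporter G j i = g • (stabilizer G j : Set G) := by
  rw [← h, transporter_smul]
  rfl

lemma transporter_nonempty_of_smul_mem_orbit {j i : ι} {g : G} (h : g • i ∈ orbit G j) :
    (transporter G j i).Nonempty := by
  rw [← Set.smul_set_nonempty (a := g), ← transporter_smul]
  exact h

lemma injOn_transporter (j : ι) : Set.InjOn (transporter G j) (orbit G j) := by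
  rintro a ⟨g, rfl⟩ b - hab
  exact (hab ▸ rfl : g ∈ transporter G j b)

lemma IsPairTranslate.mono {T T' : Finset (ι × ι)} (hT : T ⊆ T') {a b : ι}
    (h : IsPairTranslate G T a b) : IsPairTranslate G T' a b := by
  obtain ⟨g, p, hp, hab⟩ := h
  exact ⟨g, p, hT hp, hab⟩

theorem exists_ncard_le_of_pairwise_isPairTranslate {S : Set G} (hS : Subgroup.closure S = ⊤)
    {j : ι} (hbp : BoundedPacking S (stabilizer G j)) (T : Finset (ι × ι)) :
    ∃ k : ℕ, ∀ R ⊆ orbit G j, R.Pairwise (IsPairTranslate G T) → R.Finite ∧ R.ncard ≤ k := by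
  classical
  have hnear : ∀ᶠ D in Filter.atTop, ∀ p ∈ T, (transporter G j p.1).Nonempty →
      (transporter G j p.2).Nonempty →
      DClose S D (transporter G j p.1) (transporter G j p.2) := by
    simp only [Filter.eventually_all_finset, Filter.eventually_imp_distrib_left]
    exact fun p _ h₁ h₂ => eventually_dClose_of_closure_eq_top hS h₁ h₂
  obtain ⟨D, hD, hDpos⟩ := (hnear.and (Filter.eventually_gt_atTop 0)).exists
  obtain ⟨k, hk⟩ := hbp D hDpos
  refine ⟨k, fun R hR hpairs => ?_⟩
  have hinj : Set.InjOn (transporter G j) R := (injOn_transporter j).mono hR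
  have hcosets : ∀ A ∈ transporter G j '' R, ∃ g : G, A = g • (stabilizer G j : Set G) := by
    rintro _ ⟨a, ha, rfl⟩
    obtain ⟨g, hg⟩ := hR ha
    exact ⟨g, transporter_eq_smul_stabilizer hg⟩
  have hclose : (transporter G j '' R).Pairwise (DClose S D) := by
    rintro _ ⟨a, ha, rfl⟩ _ ⟨b, hb, rfl⟩ hne
    obtain ⟨g, p, hp, ⟨rfl, rfl⟩ | ⟨rfl, rfl⟩⟩ := hpairs ha hb (ne_of_apply_ne _ hne) <;>
      rw [transporter_smul, transporter_smul]
    · exact (hD p hp (transporter_nonempty_of_smul_mem_orbit (hR ha))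
        (transporter_nonempty_of_smul_mem_orbit (hR hb))).smul g
    · exact (hD p hp (transporter_nonempty_of_smul_mem_orbit (hR hb))
        (transporter_nonempty_of_smul_mem_orbit (hR ha))).smul g |>.symm
  obtain ⟨hfin, hcard⟩ := hk _ hcosets hclose
  exact ⟨hfin.of_finite_image hinj, hinj.ncard_image ▸ hcard⟩

end MulAction

namespace Wallspace

variable {X ι : Type*} (W : Wallspace X ι) {c : ι → Bool}

lemma Reversible.side_inter_nonempty (hc : W.IsZeroCube c) {i : ι} (hi : W.Reversible c i)
    (b : Bool) {k : ι} (hk : k ≠ i) : (W.side i b ∩ W.side k (c k)).Nonempty := by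
  classical
  rcases Bool.eq_or_eq_not b (c i) with rfl | rfl
  · exact hc.1 i k
  · have h := (hi _ (Function.update_self _ _ _) fun j hj => Function.update_of_ne hj _ _).1 i k
    rwa [Function.update_self, Function.update_of_ne hk] at h

lemma Reversible.not_separatesWalls (hc : W.IsZeroCube c) {i j : ι} (hi : W.Reversible c i)
    (hj : W.Reversible c j) (k : ι) : ¬ W.SeparatesWalls k i j := by
  rintro ⟨hki, hkj, a, bi, bj, hi_sub, hj_sub⟩
  rcases Bool.eq_or_eq_not (c k) a with hca | hca
  · obtain ⟨x, hxj, hxk⟩ := hj.side_inter_nonempty W hc bj hkj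
    have := hj_sub hxj
    simp_all [openSide]
  · obtain ⟨x, hxi, hxk⟩ := hi.side_inter_nonempty W hc bi hki
    have := hi_sub hxi
    simp_all [openSide]

lemma Reversible.transverse_or_osculate (hc : W.IsZeroCube c) {i j : ι}
    (hi : W.Reversible c i) (hj : W.Reversible c j) (hij : i ≠ j) :
    W.Transverse i j ∨ W.Osculate i j :=
  or_iff_not_imp_left.mpr fun ht => ⟨hij, ht, hi.not_separatesWalls W hc hj⟩

end Wallspace

theorem bounded_packing_implies_uniformly_locally_finite_general
    {G X ι : Type*} [Group G] [MulAction G ι]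
    (S : Finset G) (hS : Subgroup.closure (S : Set G) = ⊤)
    (W : Wallspace X ι)
    (horb : ∃ F : Finset ι, ∀ i : ι, ∃ g : G, ∃ j ∈ F, i = g • j)
    (htrans : ∃ P : Finset (ι × ι), ∀ i j : ι, W.Transverse i j →
      ∃ g : G, ∃ p ∈ P, (i = g • p.1 ∧ j = g • p.2) ∨ (i = g • p.2 ∧ j = g • p.1))
    (hosc : ∃ Q : Finset (ι × ι), ∀ i j : ι, W.Osculate i j →
      ∃ g : G, ∃ p ∈ Q, (i = g • p.1 ∧ j = g • p.2) ∨ (i = g • p.2 ∧ j = g • p.1))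
    (hbp : ∀ i : ι, BoundedPacking (S : Set G) (MulAction.stabilizer G i)) :
    ∃ N : ℕ, ∀ c : ι → Bool, W.IsZeroCube c →
      {i : ι | W.Reversible c i}.Finite ∧ {i : ι | W.Reversible c i}.ncard ≤ N := by
  classical
  obtain ⟨F, hF⟩ := horb
  obtain ⟨P, hP⟩ := htrans
  obtain ⟨Q, hQ⟩ := hosc
  choose k hk using fun j =>
    MulAction.exists_ncard_le_of_pairwise_isPairTranslate hS (hbp j) (P ∪ Q)
  refine ⟨∑ j ∈ F, k j, fun c hc => ?_⟩
  have hpairs : {i | W.Reversible c i}.Pairwise (MulAction.IsPairTranslate G (P ∪ Q)) := by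
    intro i hi j hj hij
    rcases hi.transverse_or_osculate W hc hj hij with ht | ho
    · exact MulAction.IsPairTranslate.mono Finset.subset_union_left (hP i j ht)
    · exact MulAction.IsPairTranslate.mono Finset.subset_union_right (hQ i j ho)
  have hcover :
      {i | W.Reversible c i} = ⋃ j ∈ F, {i | W.Reversible c i} ∩ MulAction.orbit G j := by
    ext i
    obtain ⟨g, j, hj, rfl⟩ := hF i
    simpa using fun _ => ⟨j, hj, g, rfl⟩
  have hpiece : ∀ j, ({i | W.Reversible c i} ∩ MulAction.orbit G j).Finite ∧
      ({i | W.Reversible c i} ∩ MulAction.orbit G j).ncard ≤ k j :=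
    fun j => hk j _ Set.inter_subset_right (hpairs.mono Set.inter_subset_left)
  rw [hcover]
  exact ⟨F.finite_toSet.biUnion fun j _ => (hpiece j).1,
    (F.set_ncard_biUnion_le _).trans (Finset.sum_le_sum fun j _ => (hpiece j).2)⟩

/-- **Bounded packing implies uniform local finiteness.**  Let `G` with finite generating
set `S` act on a wallspace `(X, W)` with finitely many orbits of wall indices, finitely many
orbits of unordered pairs of transverse walls and of unordered pairs of osculating walls,
and suppose each wall stabilizer has bounded packing in `G`.  Then the dual cube complex is
uniformly locally finite: there exists `N` bounding the number of reversible walls at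
every `0`-cube. -/
theorem bounded_packing_implies_uniformly_locally_finite
    {G X ι : Type*} [Group G] [MulAction G X] [MulAction G ι]
    (S : Finset G) (hS : Subgroup.closure (S : Set G) = ⊤)
    (W : Wallspace X ι) (hact : WallspaceAction G W)
    (horb : ∃ F : Finset ι, ∀ i : ι, ∃ g : G, ∃ j ∈ F, i = g • j)
    (htrans : ∃ P : Finset (ι × ι), ∀ i j : ι, W.Transverse i j →
      ∃ g : G, ∃ p ∈ P, (i = g • p.1 ∧ j = g • p.2) ∨ (i = g • p.2 ∧ j = g • p.1))
    (hosc : ∃ Q : Finset (ι × ι), ∀ i j : ι, W.Osculate i j →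
      ∃ g : G, ∃ p ∈ Q, (i = g • p.1 ∧ j = g • p.2) ∨ (i = g • p.2 ∧ j = g • p.1))
    (hbp : ∀ i : ι, BoundedPacking (S : Set G) (MulAction.stabilizer G i)) :
    ∃ N : ℕ, ∀ c : ι → Bool, W.IsZeroCube c →
      {i : ι | W.Reversible c i}.Finite ∧ {i : ι | W.Reversible c i}.ncard ≤ N :=
  bounded_packing_implies_uniformly_locally_finite_general S hS W horb htrans hosc hbp
end

section
/- (Connectedness of the dual cube complex) Let (X, W) be a wallspace. Then the 0-cubes of the dual cube complex form a connected graph under adjacency: for any two 0-cubes c and d there is a finite sequence c = c₀, c₁, …, c_n = d of 0-cubes in which consecutive 0-cubes are adjacent (differ at exactly one wall index). -/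
open Pointwise

/-!
Walk from `c` towards `d` by reversing, one at a time, the finitely many walls on which they
disagree. Among those walls choose one, `i`, whose `d`-halfspace `B` is maximal. Reversing `i`
can only fail because some other disagreeing wall `k` has its `c`-halfspace disjoint from `B`;
maximality then forces `k` to be the genuine partition `{B, Bᶜ}`. In that case reverse `k`
instead: a wall obstructing `k` would be the same genuine partition, which condition (iii)
forbids.
-/

namespace Wallspace

variable {X ι : Type*} (W : Wallspace X ι)

theorem side_union_side_not (i : ι) (b : Bool) : W.side i b ∪ W.side i (!b) = Set.univ := by
  cases b
  · rw [Set.union_comm]; exact W.cover i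
  · exact W.cover i

theorem side_inter_side_not (i : ι) (b : Bool) :
    W.side i b ∩ W.side i (!b) = W.U i ∩ W.V i := by
  cases b
  · exact Set.inter_comm _ _
  · rfl

theorem subset_side_not_of_disjoint {A : Set X} {i : ι} {b : Bool}
    (h : Disjoint A (W.side i b)) : A ⊆ W.side i (!b) := fun x hx =>
  ((W.side_union_side_not i b).symm ▸ Set.mem_univ x).resolve_left
    (Set.disjoint_left.mp h hx)

theorem side_not_eq_compl_of_disjoint {i : ι} {b : Bool}
    (h : Disjoint (W.side i b) (W.side i (!b))) : W.side i (!b) = (W.side i b)ᶜ :=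
  (IsCompl.compl_eq ⟨h, codisjoint_iff.mpr (W.side_union_side_not i b)⟩).symm

/-- Condition (iii) in terms of `side`: a genuine partition is carried by at most one wall. -/
theorem eq_of_side_eq_of_disjoint {i j : ι} {bi bj : Bool} (hside : W.side i bi = W.side j bj)
    (hi : Disjoint (W.side i bi) (W.side i (!bi))) (hj : Disjoint (W.side j bj) (W.side j (!bj)))
    (hne : (W.side i bi).Nonempty) (hne' : (W.side i (!bi)).Nonempty) : i = j := by
  by_contra hij
  have hside' : W.side i (!bi) = W.side j (!bj) := by
    rw [W.side_not_eq_compl_of_disjoint hi, W.side_not_eq_compl_of_disjoint hj, hside]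
  have hUV : W.U i ∩ W.V i = ∅ := by
    rw [← W.side_inter_side_not i bi, ← Set.disjoint_iff_inter_eq_empty]; exact hi
  cases bi <;> cases bj <;>
    simp only [side, Bool.not_true, Bool.not_false] at hside hside' hne hne' <;>
    first
    | exact W.no_dup_partition i j hij (Or.inl ⟨hside', hside⟩) hUV ⟨hne', hne⟩
    | exact W.no_dup_partition i j hij (Or.inr ⟨hside', hside⟩) hUV ⟨hne', hne⟩
    | exact W.no_dup_partition i j hij (Or.inr ⟨hside, hside'⟩) hUV ⟨hne, hne'⟩
    | exact W.no_dup_partition i j hij (Or.inl ⟨hside, hside'⟩) hUV ⟨hne, hne'⟩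

variable {W}

theorem IsZeroCube.side_nonempty {c : ι → Bool} (hc : W.IsZeroCube c) (i : ι) :
    (W.side i (c i)).Nonempty := by
  simpa only [Set.inter_self] using hc.1 i i

theorem IsZeroCube.finite_setOf_ne {c d : ι → Bool} (hc : W.IsZeroCube c) (hd : W.IsZeroCube d) :
    {i | c i ≠ d i}.Finite := by
  rcases Set.eq_empty_or_nonempty {i | c i ≠ d i} with h | ⟨i, -⟩
  · exact h ▸ Set.finite_empty
  obtain ⟨x, -⟩ := hc.side_nonempty i
  refine (((hc.2 x).union (hd.2 x)).union (W.betwixt_finite x)).subset fun j hj => ?_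
  rw [Set.mem_ofPred_eq, ← Bool.eq_not] at hj
  by_cases hxc : x ∈ W.side j (c j)
  · by_cases hxd : x ∈ W.side j (d j)
    · right
      rw [Set.mem_ofPred_eq, ← W.side_inter_side_not j (d j), ← hj]
      exact ⟨hxd, hxc⟩
    · exact Or.inl (Or.inr hxd)
  · exact Or.inl (Or.inl hxc)

theorem IsZeroCube.reversible_of_not_disjoint {c : ι → Bool} (hc : W.IsZeroCube c) {m : ι}
    (hm : (W.side m (!c m)).Nonempty)
    (hmeet : ∀ k ≠ m, ¬Disjoint (W.side m (!c m)) (W.side k (c k))) : W.Reversible c m := by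
  intro c' hcm hc'
  have hmeet' : ∀ k, (W.side m (c' m) ∩ W.side k (c' k)).Nonempty := fun k => by
    rcases eq_or_ne k m with rfl | hk
    · simpa only [hcm, Set.inter_self] using hm
    · rw [hcm, hc' k hk]
      exact Set.not_disjoint_iff_nonempty_inter.mp (hmeet k hk)
  refine ⟨fun i j => ?_, fun x => ((hc.2 x).insert m).subset fun j hj => ?_⟩
  · rcases eq_or_ne i m with rfl | hi
    · exact hmeet' j
    rcases eq_or_ne j m with rfl | hj
    · rw [Set.inter_comm]; exact hmeet' i
    rw [hc' i hi, hc' j hj]; exact hc.1 i j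
  · rcases eq_or_ne j m with rfl | hjm
    · exact Set.mem_insert _ _
    · rw [Set.mem_ofPred_eq, hc' j hjm] at hj
      exact Set.mem_insert_of_mem _ hj

theorem adjacent_of_eq_of_ne {c c' : ι → Bool} (hc : W.IsZeroCube c) (hc' : W.IsZeroCube c')
    {m : ι} (hm : c m ≠ c' m) (heq : ∀ j ≠ m, c' j = c j) : W.Adjacent c c' :=
  ⟨hc, hc', m, hm, fun j hj => by_contra fun hjm => hj (heq j hjm).symm⟩

theorem IsZeroCube.exists_reversible_of_ne {c d : ι → Bool} (hc : W.IsZeroCube c)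
    (hd : W.IsZeroCube d) (hfin : {i | c i ≠ d i}.Finite) (hne : {i | c i ≠ d i}.Nonempty) :
    ∃ m, c m ≠ d m ∧ W.Reversible c m := by
  suffices ∃ m, c m ≠ d m ∧ ∀ k ≠ m, ¬Disjoint (W.side m (d m)) (W.side k (c k)) by
    obtain ⟨m, hm, hmeet⟩ := this
    rw [Bool.eq_not.mpr hm.symm] at hmeet
    exact ⟨m, hm, hc.reversible_of_not_disjoint
      (Bool.eq_not.mpr hm.symm ▸ hd.side_nonempty m) hmeet⟩
  obtain ⟨i, hiD, hmax⟩ := hfin.exists_maximalFor (fun j => W.side j (d j)) _ hne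
  set B := W.side i (d i)
  -- an obstruction to reversing `i` is a genuine partition `{B, Bᶜ}`
  have hobstruction : ∀ k, c k ≠ d k → Disjoint B (W.side k (c k)) →
      W.side k (d k) = B ∧ Disjoint (W.side k (d k)) (W.side k (!(d k))) := fun k hk hdisj => by
    have hsub : B ⊆ W.side k (d k) := by
      rw [Bool.eq_not.mpr hk.symm]; exact W.subset_side_not_of_disjoint hdisj
    have hkB : W.side k (d k) = B := le_antisymm (hmax hk hsub) hsub
    refine ⟨hkB, ?_⟩
    rwa [hkB, ← Bool.eq_not.mpr hk]
  have hagree : ∀ m k, c k = d k → ¬Disjoint (W.side m (d m)) (W.side k (c k)) :=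
    fun m k hk => by
      rw [hk, Set.not_disjoint_iff_nonempty_inter]; exact hd.1 m k
  by_cases hi : ∀ k ≠ i, c k ≠ d k → ¬Disjoint B (W.side k (c k))
  · refine ⟨i, hiD, fun k hki => ?_⟩
    by_cases hk : c k = d k
    exacts [hagree i k hk, hi k hki hk]
  push Not at hi
  obtain ⟨j, -, hjD, hjdisj⟩ := hi
  obtain ⟨hjB, hjsides⟩ := hobstruction j hjD hjdisj
  refine ⟨j, hjD, fun k hkj hkdisj => ?_⟩
  by_cases hk : c k = d k
  · exact hagree j k hk hkdisj
  obtain ⟨hkB, hksides⟩ := hobstruction k hk (hjB ▸ hkdisj)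
  refine hkj (W.eq_of_side_eq_of_disjoint (hjB.trans hkB.symm) hjsides hksides
    (hd.side_nonempty j) ?_).symm
  simpa only [← Bool.eq_not.mpr hjD] using hc.side_nonempty j

theorem reflTransGen_adjacent_of_setOf_ne_subset [DecidableEq ι] {d : ι → Bool}
    (hd : W.IsZeroCube d) (s : Finset ι) :
    ∀ c, W.IsZeroCube c → {i | c i ≠ d i} ⊆ s → Relation.ReflTransGen W.Adjacent c d := by
  induction s using Finset.strongInduction with
  | H s ih =>
    intro c hc hs
    rcases Set.eq_empty_or_nonempty {i | c i ≠ d i} with hempty | hne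
    · have hcd : c = d := funext fun i => by_contra fun hi => hempty.subset hi
      exact hcd ▸ Relation.ReflTransGen.refl
    obtain ⟨m, hm, hrev⟩ := hc.exists_reversible_of_ne hd (s.finite_toSet.subset hs) hne
    have heq : ∀ j ≠ m, Function.update c m (d m) j = c j := fun j hj =>
      Function.update_of_ne hj _ _
    have hc' := hrev _ (by rw [Function.update_self, Bool.eq_not.mpr hm.symm]) heq
    refine .head (adjacent_of_eq_of_ne hc hc' (by rwa [Function.update_self]) heq)
      (ih _ (s.erase_ssubset (hs hm)) _ hc' fun j hj => ?_)
    rcases eq_or_ne j m with rfl | hjm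
    · exact (hj (Function.update_self j (d j) c)).elim
    · rw [Set.mem_ofPred_eq, heq j hjm] at hj
      exact Finset.mem_erase.mpr ⟨hjm, hs hj⟩

end Wallspace

/-- **Connectedness of the dual cube complex.**  For any two `0`-cubes `c` and `d` of the
dual cube complex of a wallspace, there is a finite sequence of `0`-cubes from `c` to `d` in
which consecutive `0`-cubes are adjacent (differ at exactly one wall index). -/
theorem dual_cube_complex_connected
    {X ι : Type*} (W : Wallspace X ι)
    (c d : ι → Bool) (hc : W.IsZeroCube c) (hd : W.IsZeroCube d) :
    Relation.ReflTransGen W.Adjacent c d := by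
  classical
  let D := (hc.finite_setOf_ne hd).toFinset
  exact Wallspace.reflTransGen_adjacent_of_setOf_ne_subset hd D c hc (Set.Finite.coe_toFinset _).ge
end
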